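/- If μ ∈ (-3/4, 1/4) and y₀ ∈ (-1/4, 1/4), then the orbit of y₀ under the quadratic map f_μ(y) = y² + μ converges to the attracting fixed point y* = (1 - √(1-4μ))/2; that is, the interval (-1/4, 1/4) is contained in the basin of attraction of the sink. -/

import Mathlib

/-!
Let `a` be the sink, so `a ^ 2 + μ = a` and `|a| < 1 / 2`. Then `f y - a = (y + a) (y - a)`, hence
`f (f y) - a = (f y + a) (y + a) (y - a)`. With `r = max (1 / 2) (-μ)` the interval `[-r, r]` is
mapped into itself and contains `(-1 / 4, 1 / 4)`, and on it the two-step multiplier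
`|(f y + a) (y + a)|` is below `1`, so by compactness below some `q < 1`. Thus `f ∘ f` contracts
towards `a` on `[-r, r]`, and both the even and the odd iterates converge to `a`. One step does not
suffice: for `μ` close to `-3 / 4` the factor `|y + a|` exceeds `1` near `y = -r`.
-/

open Filter Set Topology

theorem tendsto_of_even_of_odd {X : Type*} {u : ℕ → X} {l : Filter X}
    (h₀ : Tendsto (fun k ↦ u (2 * k)) atTop l) (h₁ : Tendsto (fun k ↦ u (2 * k + 1)) atTop l) :
    Tendsto u atTop l := by
  intro s hs
  obtain ⟨N₀, hN₀⟩ := eventually_atTop.1 (h₀ hs)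
  obtain ⟨N₁, hN₁⟩ := eventually_atTop.1 (h₁ hs)
  refine eventually_atTop.2 ⟨2 * max N₀ N₁, fun n hn ↦ ?_⟩
  obtain ⟨k, rfl | rfl⟩ := Nat.even_or_odd' n
  · exact hN₀ k (by omega)
  · exact hN₁ k (by omega)

section Contraction

variable {X : Type*} [PseudoMetricSpace X] {f : X → X} {K : Set X} {a : X} {q : ℝ}

theorem dist_iterate_le_of_dist_le_mul (hK : MapsTo f K K)
    (hf : ∀ y ∈ K, dist (f y) a ≤ q * dist y a) (hq : 0 ≤ q) {y : X} (hy : y ∈ K) (n : ℕ) :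
    dist (f^[n] y) a ≤ q ^ n * dist y a := by
  induction n with
  | zero => simp
  | succ n ih =>
    calc dist (f^[n + 1] y) a = dist (f (f^[n] y)) a := by rw [Function.iterate_succ_apply']
      _ ≤ q * dist (f^[n] y) a := hf _ (hK.iterate n hy)
      _ ≤ q * (q ^ n * dist y a) := mul_le_mul_of_nonneg_left ih hq
      _ = q ^ (n + 1) * dist y a := by ring

theorem tendsto_iterate_of_dist_le_mul (hK : MapsTo f K K)
    (hf : ∀ y ∈ K, dist (f y) a ≤ q * dist y a) (hq₀ : 0 ≤ q) (hq₁ : q < 1) {y : X}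
    (hy : y ∈ K) : Tendsto (fun n ↦ f^[n] y) atTop (𝓝 a) := by
  rw [tendsto_iff_dist_tendsto_zero]
  refine squeeze_zero (fun _ ↦ dist_nonneg) (dist_iterate_le_of_dist_le_mul hK hf hq₀ hy) ?_
  simpa using (tendsto_pow_atTop_nhds_zero_of_lt_one hq₀ hq₁).mul_const (dist y a)

theorem tendsto_iterate_of_dist_comp_le_mul (hK : MapsTo f K K)
    (hf : ∀ y ∈ K, dist (f (f y)) a ≤ q * dist y a) (hq₀ : 0 ≤ q) (hq₁ : q < 1) {y : X}
    (hy : y ∈ K) : Tendsto (fun n ↦ f^[n] y) atTop (𝓝 a) := by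
  have h₂ {x : X} (hx : x ∈ K) : Tendsto (fun k ↦ (f^[2])^[k] x) atTop (𝓝 a) :=
    tendsto_iterate_of_dist_le_mul (hK.iterate 2) hf hq₀ hq₁ hx
  refine tendsto_of_even_of_odd ?_ ?_
  · simpa only [Function.iterate_mul] using h₂ hy
  · simpa only [Function.iterate_succ_apply, Function.iterate_mul] using h₂ (hK hy)

end Contraction

section Quadratic

variable {μ a : ℝ}

theorem quadratic_sub_fixedPoint (hfix : a ^ 2 + μ = a) (y : ℝ) :
    y ^ 2 + μ - a = (y + a) * (y - a) := by
  linear_combination hfix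

theorem mapsTo_quadratic_Icc {r : ℝ} (hμ : -r ≤ μ) (hr : r ^ 2 + μ ≤ r) :
    MapsTo (fun y ↦ y ^ 2 + μ) (Icc (-r) r) (Icc (-r) r) := by
  rintro y ⟨hy₁, hy₂⟩
  have : y ^ 2 ≤ r ^ 2 := sq_le_sq' hy₁ hy₂
  constructor <;> nlinarith [sq_nonneg y]

noncomputable def trappingRadius (μ : ℝ) : ℝ := max (1 / 2) (-μ)

theorem neg_trappingRadius_le : -trappingRadius μ ≤ μ := neg_le.2 (le_max_right _ _)

theorem trappingRadius_sq_add_le (hμ : μ ∈ Icc (-2) (1 / 4)) :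
    trappingRadius μ ^ 2 + μ ≤ trappingRadius μ := by
  obtain ⟨hμ₁, hμ₂⟩ := hμ
  rcases le_total (1 / 2) (-μ) with h | h
  · rw [trappingRadius, max_eq_right h]; nlinarith
  · rw [trappingRadius, max_eq_left h]; linarith

theorem abs_two_step_multiplier_lt_one (hfix : a ^ 2 + μ = a) (ha : a ∈ Ioo (-1 / 2) (1 / 2))
    {y : ℝ} (hy : |y| ≤ trappingRadius μ) : |(y ^ 2 + μ + a) * (y + a)| < 1 := by
  obtain ⟨ha₁, ha₂⟩ := ha
  obtain rfl : μ = a - a ^ 2 := by linarith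
  rw [abs_lt]
  rcases le_max_iff.1 hy with hy | hy <;> obtain ⟨hy₁, hy₂⟩ := abs_le.1 hy
  · constructor <;> nlinarith [mul_nonneg (sub_nonneg.2 hy₁) (sub_nonneg.2 hy₂),
      mul_pos (sub_pos.2 ha₁) (sub_pos.2 ha₂), sq_nonneg (y - a), sq_nonneg (y + a)]
  · have ha₀ : a ≤ 0 := by nlinarith
    constructor <;> nlinarith [mul_nonneg (sub_nonneg.2 hy₁) (sub_nonneg.2 hy₂),
      mul_nonneg (sub_pos.2 ha₁).le (neg_nonneg.2 ha₀), sq_nonneg (y - a), sq_nonneg (y + a)]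

theorem exists_dist_quadratic_comp_le_mul (hfix : a ^ 2 + μ = a)
    (ha : a ∈ Ioo (-1 / 2) (1 / 2)) :
    ∃ q, 0 ≤ q ∧ q < 1 ∧ ∀ y ∈ Icc (-trappingRadius μ) (trappingRadius μ),
      dist ((y ^ 2 + μ) ^ 2 + μ) a ≤ q * dist y a := by
  set ψ : ℝ → ℝ := fun y ↦ |(y ^ 2 + μ + a) * (y + a)|
  have hne : (Icc (-trappingRadius μ) (trappingRadius μ)).Nonempty :=
    nonempty_Icc.2 (neg_le_self ((by norm_num : (0 : ℝ) ≤ 1 / 2).trans (le_max_left _ _)))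
  obtain ⟨c, hc, hmax⟩ := isCompact_Icc.exists_isMaxOn hne (by fun_prop : Continuous ψ).continuousOn
  refine ⟨ψ c, abs_nonneg _, abs_two_step_multiplier_lt_one hfix ha (abs_le.2 hc), ?_⟩
  intro y hy
  calc dist ((y ^ 2 + μ) ^ 2 + μ) a = ψ y * dist y a := by
        simp only [ψ, Real.dist_eq, quadratic_sub_fixedPoint hfix, abs_mul, mul_assoc]
    _ ≤ ψ c * dist y a := mul_le_mul_of_nonneg_right (hmax hy) dist_nonneg

theorem tendsto_iterate_quadratic (hfix : a ^ 2 + μ = a) (ha : a ∈ Ioo (-1 / 2) (1 / 2))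
    {y : ℝ} (hy : |y| ≤ trappingRadius μ) :
    Tendsto (fun n ↦ (fun y ↦ y ^ 2 + μ)^[n] y) atTop (𝓝 a) := by
  obtain ⟨q, hq₀, hq₁, hq⟩ := exists_dist_quadratic_comp_le_mul hfix ha
  have hμ : μ ∈ Icc (-2) (1 / 4) := by
    obtain ⟨ha₁, ha₂⟩ := ha
    constructor <;> nlinarith
  exact tendsto_iterate_of_dist_comp_le_mul
    (mapsTo_quadratic_Icc neg_trappingRadius_le (trappingRadius_sq_add_le hμ)) hq hq₀ hq₁
    (abs_le.1 hy)

end Quadratic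

theorem quadratic_sink_sq_add_eq {μ : ℝ} (hμ : μ ≤ 1 / 4) :
    ((1 - √(1 - 4 * μ)) / 2) ^ 2 + μ = (1 - √(1 - 4 * μ)) / 2 := by
  linear_combination Real.sq_sqrt (by linarith : 0 ≤ 1 - 4 * μ) / 4

theorem quadratic_sink_mem_Ioo {μ : ℝ} (hμ : μ ∈ Ioo (-3 / 4 : ℝ) (1 / 4)) :
    (1 - √(1 - 4 * μ)) / 2 ∈ Ioo (-1 / 2) (1 / 2) := by
  obtain ⟨hμ₁, hμ₂⟩ := hμ
  have h₀ : 0 < √(1 - 4 * μ) := Real.sqrt_pos.2 (by linarith)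
  have h₂ : √(1 - 4 * μ) < 2 := (Real.sqrt_lt' two_pos).2 (by linarith)
  constructor <;> linarith

theorem quadratic_basin_of_attraction (μ : ℝ) (hμ : μ ∈ Ioo (-3 / 4 : ℝ) (1 / 4))
    (y₀ : ℝ) (hy₀ : y₀ ∈ Ioo (-1 / 4 : ℝ) (1 / 4)) :
    Tendsto (fun n : ℕ => (fun y : ℝ => y ^ 2 + μ)^[n] y₀) atTop
      (nhds ((1 - Real.sqrt (1 - 4 * μ)) / 2)) := by
  refine tendsto_iterate_quadratic (quadratic_sink_sq_add_eq hμ.2.le) (quadratic_sink_mem_Ioo hμ) ?_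
  exact (abs_le.2 ⟨by linarith [hy₀.1], by linarith [hy₀.2]⟩).trans (le_max_left _ _)
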